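/- Let W be a standard Brownian motion on [0,T], h ∈ L²([0,T]) bounded, and π = {0=t₀<t₁<⋯<t_n=T} a partition with mesh |π|. Then for any p' ≥ 2 there is a constant C (independent of π) such that E max_{0≤k≤n−1} |∫_{t_k}^{t_{k+1}} h(r) dW_r|^{p'} ≤ C r^{p'/2} |π|^{p'/2 − 1/r} for every r > 1; in particular, choosing r = 2log(1/|π|)/p', for |π| small enough, E max_{0≤k≤n−1} |∫_{t_k}^{t_{k+1}} h(r) dW_r|^{p'} ≤ C |π|^{p'/2 − p'/(2 log(1/|π|))} (log(1/|π|))^{p'/2}. -/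

import Mathlib

/-!
Each increment `ξ_k` is a centred Gaussian with variance at most `K Δ_k`, where `K = M² + 1`
and `Δ_k = t_{k+1} - t_k`. Optimising the exponential-moment bound
`|x|^q ≤ (q / (e t))^q (e^{tx} + e^{-tx})` over `t` gives `E|ξ_k|^q ≤ 2 (q K Δ_k)^{q/2}`.
For `q = p' r`, bounding the maximum by the `ℓ^r`-sum and applying Jensen's inequality gives
`E max_k |ξ_k|^{p'} ≤ (∑_k E|ξ_k|^q)^{1/r} ≤ (2 (q K)^{q/2} |π|^{q/2-1} T)^{1/r}`, which is at most
`C r^{p'/2} |π|^{p'/2-1/r}`. The logarithmic rate is the choice `r = 2 log(1/|π|) / p'`.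
-/

open MeasureTheory ProbabilityTheory Real
open scoped NNReal ENNReal

theorem rpow_le_div_exp_one_rpow_mul_exp {y q : ℝ} (hy : 0 ≤ y) (hq : 0 < q) :
    y ^ q ≤ (q / exp 1) ^ q * exp y := by
  have hyq : y / q ≤ exp (y / q - 1) := by linarith [add_one_le_exp (y / q - 1)]
  calc y ^ q = q ^ q * (y / q) ^ q := by
        rw [div_rpow hy hq.le, mul_div_cancel₀ _ (rpow_pos_of_pos hq q).ne']
    _ ≤ q ^ q * exp (y / q - 1) ^ q := by gcongr
    _ = (q / exp 1) ^ q * exp y := by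
        rw [← exp_mul, div_rpow hq.le (exp_pos 1).le, exp_one_rpow, sub_mul,
          div_mul_cancel₀ _ hq.ne', one_mul, exp_sub]
        ring

theorem abs_rpow_le_mul_exp_add_exp (x : ℝ) {q t : ℝ} (hq : 0 < q) (ht : 0 < t) :
    |x| ^ q ≤ (q / (exp 1 * t)) ^ q * (exp (t * x) + exp (-t * x)) := by
  have htq : 0 < t ^ q := rpow_pos_of_pos ht q
  have hexp : exp (t * |x|) ≤ exp (t * x) + exp (-t * x) := by
    rcases abs_cases x with ⟨hx, -⟩ | ⟨hx, -⟩
    · rw [hx]; linarith [exp_pos (-t * x)]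
    · rw [hx, mul_neg, ← neg_mul]; linarith [exp_pos (t * x)]
  calc |x| ^ q = (t * |x|) ^ q / t ^ q := by
        rw [mul_rpow ht.le (abs_nonneg x), mul_div_cancel_left₀ _ htq.ne']
    _ ≤ (q / exp 1) ^ q * exp (t * |x|) / t ^ q := by
        gcongr; exact rpow_le_div_exp_one_rpow_mul_exp (by positivity) hq
    _ ≤ (q / exp 1) ^ q * (exp (t * x) + exp (-t * x)) / t ^ q := by gcongr
    _ = (q / (exp 1 * t)) ^ q * (exp (t * x) + exp (-t * x)) := by
        rw [← div_div, div_rpow (by positivity) ht.le]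
        ring

theorem Finset.sum_rpow_le_rpow_sub_one_mul_sum {ι : Type*} (s : Finset ι) {a : ι → ℝ} {b x : ℝ}
    (ha : ∀ i ∈ s, 0 ≤ a i) (hab : ∀ i ∈ s, a i ≤ b) (hx : 1 ≤ x) :
    ∑ i ∈ s, a i ^ x ≤ b ^ (x - 1) * ∑ i ∈ s, a i := by
  rw [Finset.mul_sum]
  refine Finset.sum_le_sum fun i hi => ?_
  calc a i ^ x = a i ^ (x - 1) * a i := by
        rw [← rpow_add_one' (ha i hi) (by linarith)]; ring_nf
    _ ≤ b ^ (x - 1) * a i :=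
        mul_le_mul_of_nonneg_right (rpow_le_rpow (ha i hi) (hab i hi) (by linarith)) (ha i hi)

theorem setIntegral_Icc_sq_le {h : ℝ → ℝ} {M a b : ℝ} (hab : a ≤ b) (hh : ∀ x, |h x| ≤ M) :
    ∫ x in Set.Icc a b, h x ^ 2 ≤ M ^ 2 * (b - a) := by
  refine (le_abs_self _).trans ?_
  have := norm_setIntegral_le_of_norm_le_const (μ := volume) (f := fun x => h x ^ 2)
    (C := M ^ 2) (s := Set.Icc a b) measure_Icc_lt_top fun x _ => by
      rw [norm_pow, Real.norm_eq_abs]; gcongr; exact hh x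
  rwa [Real.volume_real_Icc_of_le hab] at this

theorem integral_exp_mul_gaussianReal (v : ℝ≥0) (t : ℝ) :
    ∫ x, exp (t * x) ∂gaussianReal 0 v = exp (v * t ^ 2 / 2) := by
  simpa [mgf] using congrFun (mgf_fun_id_gaussianReal (μ := 0) (v := v)) t

theorem lintegral_enorm_rpow_gaussianReal_le_of_pos (v : ℝ≥0) {q t : ℝ} (hq : 0 < q)
    (ht : 0 < t) :
    ∫⁻ x, ‖x‖ₑ ^ q ∂gaussianReal 0 v ≤
      ENNReal.ofReal ((q / (exp 1 * t)) ^ q * (2 * exp (v * t ^ 2 / 2))) := by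
  set c := (q / (exp 1 * t)) ^ q
  have hint : Integrable (fun x => c * (exp (t * x) + exp (-t * x))) (gaussianReal 0 v) :=
    ((integrable_exp_mul_gaussianReal t).add (integrable_exp_mul_gaussianReal (-t))).const_mul c
  calc ∫⁻ x, ‖x‖ₑ ^ q ∂gaussianReal 0 v
      ≤ ∫⁻ x, ENNReal.ofReal (c * (exp (t * x) + exp (-t * x))) ∂gaussianReal 0 v := by
        refine lintegral_mono fun x => ?_
        rw [Real.enorm_eq_ofReal_abs, ENNReal.ofReal_rpow_of_nonneg (abs_nonneg x) hq.le]
        exact ENNReal.ofReal_le_ofReal (abs_rpow_le_mul_exp_add_exp x hq ht)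
    _ = ENNReal.ofReal (∫ x, c * (exp (t * x) + exp (-t * x)) ∂gaussianReal 0 v) :=
        (ofReal_integral_eq_lintegral_ofReal hint (ae_of_all _ fun x => by positivity)).symm
    _ = ENNReal.ofReal (c * (2 * exp (v * t ^ 2 / 2))) := by
        rw [integral_const_mul, integral_add (integrable_exp_mul_gaussianReal t)
          (integrable_exp_mul_gaussianReal (-t)), integral_exp_mul_gaussianReal,
          integral_exp_mul_gaussianReal, neg_sq, two_mul]

theorem lintegral_enorm_rpow_gaussianReal_le (v : ℝ≥0) {q : ℝ} (hq : 0 < q) :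
    ∫⁻ x, ‖x‖ₑ ^ q ∂gaussianReal 0 v ≤ ENNReal.ofReal (2 * (q * v) ^ (q / 2)) := by
  rcases eq_or_ne v 0 with rfl | hv
  · simp [gaussianReal_zero_var, ENNReal.zero_rpow_of_pos hq]
  -- optimise the exponential moment bound at `t = q / √(q v)`
  have hv0 : (0 : ℝ) < v := by positivity
  set s := √(q * v) with hs
  have hs0 : 0 < s := by positivity
  refine (lintegral_enorm_rpow_gaussianReal_le_of_pos v hq (div_pos hq hs0)).trans
    (ENNReal.ofReal_le_ofReal ?_)
  have hbase : q / (exp 1 * (q / s)) = s / exp 1 := by field_simp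
  have hexpo : v * (q / s) ^ 2 / 2 = q / 2 := by
    rw [div_pow, hs, sq_sqrt (by positivity)]; field_simp
  rw [hbase, hexpo]
  calc (s / exp 1) ^ q * (2 * exp (q / 2)) = 2 * s ^ q * (exp (q / 2) / exp q) := by
        rw [div_rpow hs0.le (exp_pos 1).le, exp_one_rpow]; ring
    _ ≤ 2 * s ^ q * 1 := by
        gcongr; rw [div_le_one (exp_pos _)]; exact exp_le_exp.2 (by linarith)
    _ = 2 * (q * v) ^ (q / 2) := by
        rw [mul_one, hs, sqrt_eq_rpow, ← rpow_mul (by positivity)]; ring_nf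

section Moments

variable {Ω : Type*} {mΩ : MeasurableSpace Ω} (μ : Measure Ω) [IsProbabilityMeasure μ]

theorem lintegral_rpow_inv_le_rpow_inv_lintegral {f : Ω → ℝ≥0∞} (hf : AEMeasurable f μ) {r : ℝ}
    (hr : 1 ≤ r) : ∫⁻ ω, f ω ^ r⁻¹ ∂μ ≤ (∫⁻ ω, f ω ∂μ) ^ r⁻¹ := by
  have h := eLpNorm'_le_eLpNorm'_of_exponent_le one_pos hr μ
    (hf.pow_const r⁻¹).aestronglyMeasurable
  simpa [eLpNorm'_eq_lintegral_enorm, ← ENNReal.rpow_mul,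
    inv_mul_cancel₀ (zero_lt_one.trans_le hr).ne'] using h

theorem integral_iSup_abs_rpow_le {ι : Type*} [Fintype ι] [Nonempty ι] {X : ι → Ω → ℝ}
    (hX : ∀ i, AEMeasurable (X i) μ) {p r : ℝ} (hp : 0 ≤ p) (hr : 1 ≤ r) {m : ι → ℝ}
    (hm0 : ∀ i, 0 ≤ m i) (hm : ∀ i, ∫⁻ ω, ‖X i ω‖ₑ ^ (p * r) ∂μ ≤ ENNReal.ofReal (m i)) :
    ∫ ω, ⨆ i, |X i ω| ^ p ∂μ ≤ (∑ i, m i) ^ r⁻¹ := by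
  have hr0 : r ≠ 0 := (zero_lt_one.trans_le hr).ne'
  have hm_sum : 0 ≤ ∑ i, m i := Finset.sum_nonneg fun i _ => hm0 i
  have hmax : ∀ ω, ENNReal.ofReal (⨆ i, |X i ω| ^ p) ≤ (∑ i, ‖X i ω‖ₑ ^ (p * r)) ^ r⁻¹ := by
    intro ω
    obtain ⟨i, hi⟩ := exists_eq_ciSup_of_finite (f := fun i => |X i ω| ^ p)
    rw [← hi, ← ENNReal.ofReal_rpow_of_nonneg (abs_nonneg _) hp, ← Real.enorm_eq_ofReal_abs]
    calc ‖X i ω‖ₑ ^ p = (‖X i ω‖ₑ ^ (p * r)) ^ r⁻¹ := by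
          rw [← ENNReal.rpow_mul, mul_inv_cancel_right₀ hr0]
      _ ≤ _ := by
          gcongr
          exact Finset.single_le_sum (f := fun j => ‖X j ω‖ₑ ^ (p * r)) (fun j _ => zero_le)
            (Finset.mem_univ i)
  have hsup_meas : AEStronglyMeasurable (fun ω => ⨆ i, |X i ω| ^ p) μ :=
    (AEMeasurable.iSup fun i => ((hX i).abs.pow_const p)).aestronglyMeasurable
  rw [integral_eq_lintegral_of_nonneg_ae (ae_of_all _ fun ω => ?_) hsup_meas]
  swap
  · obtain ⟨i, hi⟩ := exists_eq_ciSup_of_finite (f := fun i => |X i ω| ^ p)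
    rw [← hi]; positivity
  refine ENNReal.toReal_le_of_le_ofReal (Real.rpow_nonneg hm_sum _) ?_
  calc ∫⁻ ω, ENNReal.ofReal (⨆ i, |X i ω| ^ p) ∂μ
      ≤ ∫⁻ ω, (∑ i, ‖X i ω‖ₑ ^ (p * r)) ^ r⁻¹ ∂μ := lintegral_mono hmax
    _ ≤ (∫⁻ ω, ∑ i, ‖X i ω‖ₑ ^ (p * r) ∂μ) ^ r⁻¹ :=
        lintegral_rpow_inv_le_rpow_inv_lintegral μ
          (Finset.aemeasurable_fun_sum _ fun i _ => (hX i).enorm.pow_const _) hr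
    _ = (∑ i, ∫⁻ ω, ‖X i ω‖ₑ ^ (p * r) ∂μ) ^ r⁻¹ := by
        rw [lintegral_finsetSum' _ fun i _ => (hX i).enorm.pow_const _]
    _ ≤ (∑ i, ENNReal.ofReal (m i)) ^ r⁻¹ := by gcongr with i; exact hm i
    _ = ENNReal.ofReal ((∑ i, m i) ^ r⁻¹) := by
        rw [← ENNReal.ofReal_sum_of_nonneg fun i _ => hm0 i,
          ENNReal.ofReal_rpow_of_nonneg hm_sum (by positivity)]

theorem integral_iSup_abs_rpow_le_of_map_eq_gaussianReal {ι : Type*} [Fintype ι] [Nonempty ι]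
    {ξ : ι → Ω → ℝ} (hξ : ∀ i, Measurable (ξ i)) {v : ι → ℝ≥0}
    (hlaw : ∀ i, μ.map (ξ i) = gaussianReal 0 (v i)) {p r σ2 S : ℝ} (hp : 2 ≤ p) (hr : 1 ≤ r)
    (hv : ∀ i, (v i : ℝ) ≤ σ2) (hS : ∑ i, (v i : ℝ) ≤ S) :
    ∫ ω, ⨆ i, |ξ i ω| ^ p ∂μ ≤ (p * r) ^ (p / 2) * σ2 ^ (p / 2 - r⁻¹) * (2 * S) ^ r⁻¹ := by
  set q := p * r
  have hq : 2 ≤ q := by nlinarith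
  have hσ2 : 0 ≤ σ2 := (v (Classical.arbitrary ι)).coe_nonneg.trans (hv _)
  have hS0 : 0 ≤ S := (Finset.sum_nonneg fun i _ => (v i).coe_nonneg).trans hS
  have hmoments : ∑ i, 2 * (q * v i) ^ (q / 2) ≤ 2 * q ^ (q / 2) * (σ2 ^ (q / 2 - 1) * S) := by
    calc ∑ i, 2 * (q * v i) ^ (q / 2) = 2 * q ^ (q / 2) * ∑ i, (v i : ℝ) ^ (q / 2) := by
          rw [Finset.mul_sum]
          refine Finset.sum_congr rfl fun i _ => ?_
          rw [mul_rpow (by linarith) (v i).coe_nonneg]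
          ring
      _ ≤ 2 * q ^ (q / 2) * (σ2 ^ (q / 2 - 1) * S) := by
          gcongr
          refine (Finset.sum_rpow_le_rpow_sub_one_mul_sum _ (fun i _ => (v i).coe_nonneg)
            (fun i _ => hv i) (by linarith)).trans ?_
          gcongr
  calc ∫ ω, ⨆ i, |ξ i ω| ^ p ∂μ ≤ (∑ i, 2 * (q * v i) ^ (q / 2)) ^ r⁻¹ := by
        refine integral_iSup_abs_rpow_le μ (fun i => (hξ i).aemeasurable) (by linarith) hr
          (fun i => by positivity) fun i => ?_
        rw [← lintegral_map (measurable_enorm.pow_const _) (hξ i), hlaw i]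
        exact lintegral_enorm_rpow_gaussianReal_le _ (by linarith)
    _ ≤ (2 * q ^ (q / 2) * (σ2 ^ (q / 2 - 1) * S)) ^ r⁻¹ := by gcongr
    _ = (p * r) ^ (p / 2) * σ2 ^ (p / 2 - r⁻¹) * (2 * S) ^ r⁻¹ := by
        have hr0 : r ≠ 0 := by linarith
        rw [show 2 * q ^ (q / 2) * (σ2 ^ (q / 2 - 1) * S)
            = q ^ (q / 2) * σ2 ^ (q / 2 - 1) * (2 * S) by ring,
          mul_rpow (by positivity) (by positivity), mul_rpow (by positivity) (by positivity),
          ← rpow_mul (by linarith), ← rpow_mul hσ2]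
        congr 3 <;> field_simp <;> ring

theorem integral_iSup_abs_rpow_le_of_variance_le {ι : Type*} [Fintype ι] [Nonempty ι]
    {ξ : ι → Ω → ℝ} (hξ : ∀ i, Measurable (ξ i)) {v : ι → ℝ≥0}
    (hlaw : ∀ i, μ.map (ξ i) = gaussianReal 0 (v i)) {Δ : ι → ℝ} {K D T p r : ℝ} (hK : 0 < K)
    (hv : ∀ i, (v i : ℝ) ≤ K * Δ i) (hΔ : ∀ i, 0 ≤ Δ i) (hΔD : ∀ i, Δ i ≤ D)
    (hΔT : ∑ i, Δ i = T) (hp : 2 ≤ p) (hr : 1 ≤ r) :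
    ∫ ω, ⨆ i, |ξ i ω| ^ p ∂μ ≤
      (p * K) ^ (p / 2) * (1 + 2 * T) * r ^ (p / 2) * D ^ (p / 2 - 1 / r) := by
  have hD : 0 ≤ D := (hΔ (Classical.arbitrary ι)).trans (hΔD _)
  have hT : 0 ≤ T := hΔT ▸ Finset.sum_nonneg fun i _ => hΔ i
  have hKpow : K ^ (p / 2 - r⁻¹) * K ^ r⁻¹ = K ^ (p / 2) := by rw [← rpow_add hK]; ring_nf
  have h2T : (2 * T) ^ r⁻¹ ≤ 1 + 2 * T :=
    calc (2 * T) ^ r⁻¹ ≤ (1 + 2 * T) ^ r⁻¹ := by gcongr; linarith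
      _ ≤ 1 + 2 * T := rpow_le_self_of_one_le (by linarith) (inv_le_one_of_one_le₀ hr)
  calc ∫ ω, ⨆ i, |ξ i ω| ^ p ∂μ
      ≤ (p * r) ^ (p / 2) * (K * D) ^ (p / 2 - r⁻¹) * (2 * (K * T)) ^ r⁻¹ :=
        integral_iSup_abs_rpow_le_of_map_eq_gaussianReal μ hξ hlaw hp hr
          (fun i => (hv i).trans (by gcongr; exact hΔD i))
          ((Finset.sum_le_sum fun i _ => hv i).trans_eq (by rw [← Finset.mul_sum, hΔT]))
    _ = (p * K) ^ (p / 2) * (2 * T) ^ r⁻¹ * r ^ (p / 2) * D ^ (p / 2 - 1 / r) := by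
        rw [mul_rpow (by linarith) (by linarith), mul_rpow hK.le hD, mul_left_comm 2,
          mul_rpow hK.le (by positivity), mul_rpow (by linarith) hK.le, one_div, ← hKpow]
        ring
    _ ≤ (p * K) ^ (p / 2) * (1 + 2 * T) * r ^ (p / 2) * D ^ (p / 2 - 1 / r) := by gcongr

end Moments

theorem le_mul_rpow_log_of_forall_rpow {B C D p : ℝ} (hp : 2 ≤ p) (hC : 0 ≤ C) (hD : 0 < D)
    (hDp : D < exp (-(p / 2)))
    (hB : ∀ r : ℝ, 1 < r → B ≤ C * r ^ (p / 2) * D ^ (p / 2 - 1 / r)) :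
    B ≤ C * D ^ (p / 2 - p / (2 * log (1 / D))) * log (1 / D) ^ (p / 2) := by
  set L := log (1 / D) with hL_def
  have hL : p / 2 < L := by
    rw [hL_def, one_div, log_inv, lt_neg]
    exact (log_lt_iff_lt_exp hD).2 hDp
  have hr : 1 < 2 * L / p := by rw [lt_div_iff₀ (by linarith)]; linarith
  have hr_inv : 1 / (2 * L / p) = p / (2 * L) := one_div_div _ _
  have hrL : 2 * L / p ≤ L := by rw [div_le_iff₀ (by linarith)]; nlinarith
  calc B ≤ C * (2 * L / p) ^ (p / 2) * D ^ (p / 2 - p / (2 * L)) := hr_inv ▸ hB _ hr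
    _ ≤ C * L ^ (p / 2) * D ^ (p / 2 - p / (2 * L)) := by gcongr
    _ = C * D ^ (p / 2 - p / (2 * L)) * L ^ (p / 2) := by ring

theorem stmt10_general
    {Ω : Type} {mΩ : MeasurableSpace Ω} (μ : Measure Ω) [IsProbabilityMeasure μ]
    (T : ℝ) (hT : 0 < T)
    (h : ℝ → ℝ) (M : ℝ) (hbdd : ∀ r, |h r| ≤ M)
    (p' : ℝ) (hp' : 2 ≤ p') :
    ∃ C : ℝ, 0 < C ∧ ∃ ε : ℝ, 0 < ε ∧
      ∀ (n : ℕ), 0 < n →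
        ∀ tp : ℕ → ℝ, tp 0 = 0 → tp n = T → (∀ i < n, tp i < tp (i + 1)) →
          ∀ ξ : Fin n → Ω → ℝ,
            (∀ k : Fin n, Measurable (ξ k)) →
            (∀ k : Fin n, μ.map (ξ k) =
              ProbabilityTheory.gaussianReal 0
                (Real.toNNReal (∫ r in Set.Icc (tp k.1) (tp (k.1 + 1)), (h r) ^ 2))) →
            (∀ r : ℝ, 1 < r →
              ∫ ω, (⨆ k : Fin n, |ξ k ω| ^ p') ∂μ ≤
                C * r ^ (p' / 2) *
                  (⨆ k : Fin n, (tp (k.1 + 1) - tp k.1)) ^ (p' / 2 - 1 / r)) ∧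
            ((⨆ k : Fin n, (tp (k.1 + 1) - tp k.1)) < ε →
              ∫ ω, (⨆ k : Fin n, |ξ k ω| ^ p') ∂μ ≤
                C * (⨆ k : Fin n, (tp (k.1 + 1) - tp k.1)) ^
                    (p' / 2 - p' / (2 * Real.log (1 / ⨆ k : Fin n, (tp (k.1 + 1) - tp k.1)))) *
                  (Real.log (1 / ⨆ k : Fin n, (tp (k.1 + 1) - tp k.1))) ^ (p' / 2)) := by
  set K := M ^ 2 + 1
  have hK : 0 < K := by positivity
  set C := (p' * K) ^ (p' / 2) * (1 + 2 * T)
  refine ⟨C, by positivity, exp (-(p' / 2)), exp_pos _, ?_⟩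
  intro n hn tp htp0 htpn hmono ξ hξ hlaw
  have : Nonempty (Fin n) := ⟨⟨0, hn⟩⟩
  set D := ⨆ k : Fin n, (tp (k.1 + 1) - tp k.1)
  have hΔ : ∀ k : Fin n, 0 < tp (k.1 + 1) - tp k.1 := fun k => sub_pos.2 (hmono k k.2)
  have hΔD : ∀ k : Fin n, tp (k.1 + 1) - tp k.1 ≤ D := le_ciSup (Set.finite_range _).bddAbove
  have hD : 0 < D := (hΔ ⟨0, hn⟩).trans_le (hΔD _)
  have hsum : ∑ k : Fin n, (tp (k.1 + 1) - tp k.1) = T := by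
    rw [Fin.sum_univ_eq_sum_range (fun i => tp (i + 1) - tp i) n, Finset.sum_range_sub, htpn,
      htp0, sub_zero]
  have hvar : ∀ k : Fin n, ((∫ r in Set.Icc (tp k.1) (tp (k.1 + 1)), h r ^ 2).toNNReal : ℝ) ≤
      K * (tp (k.1 + 1) - tp k.1) := fun k => by
    rw [Real.coe_toNNReal']
    refine max_le ((setIntegral_Icc_sq_le (hmono k k.2).le hbdd).trans ?_) (mul_pos hK (hΔ k)).le
    exact mul_le_mul_of_nonneg_right (by linarith) (hΔ k).le
  have hrate : ∀ r : ℝ, 1 < r →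
      ∫ ω, (⨆ k : Fin n, |ξ k ω| ^ p') ∂μ ≤ C * r ^ (p' / 2) * D ^ (p' / 2 - 1 / r) :=
    fun r hr => integral_iSup_abs_rpow_le_of_variance_le μ hξ hlaw hK hvar (fun k => (hΔ k).le)
      hΔD hsum hp' hr.le
  exact ⟨hrate, fun hDε => le_mul_rpow_log_of_forall_rpow hp' (by positivity) hD hDε hrate⟩

/-- Moment bound for the maximum of Wiener-integral increments over a partition:
each `ξ_k = ∫_{t_k}^{t_{k+1}} h(r) dW_r` is a centered Gaussian variable with variance
`∫_{t_k}^{t_{k+1}} h(r)² dr`, and for every `p' ≥ 2` there is a constant `C` independent of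
the partition such that `E max_k |ξ_k|^{p'} ≤ C r^{p'/2} |π|^{p'/2 − 1/r}` for every `r > 1`;
choosing `r = 2 log(1/|π|)/p'` yields the logarithmic rate for small mesh. -/
theorem stmt10
    {Ω : Type} {mΩ : MeasurableSpace Ω} (μ : Measure Ω) [IsProbabilityMeasure μ]
    (T : ℝ) (hT : 0 < T)
    (h : ℝ → ℝ) (hmeas : Measurable h) (M : ℝ) (hbdd : ∀ r, |h r| ≤ M)
    (p' : ℝ) (hp' : 2 ≤ p') :
    ∃ C : ℝ, 0 < C ∧ ∃ ε : ℝ, 0 < ε ∧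
      ∀ (n : ℕ), 0 < n →
        ∀ tp : ℕ → ℝ, tp 0 = 0 → tp n = T → (∀ i < n, tp i < tp (i + 1)) →
          ∀ ξ : Fin n → Ω → ℝ,
            (∀ k : Fin n, Measurable (ξ k)) →
            (∀ k : Fin n, μ.map (ξ k) =
              ProbabilityTheory.gaussianReal 0
                (Real.toNNReal (∫ r in Set.Icc (tp k.1) (tp (k.1 + 1)), (h r) ^ 2))) →
            (∀ r : ℝ, 1 < r →
              ∫ ω, (⨆ k : Fin n, |ξ k ω| ^ p') ∂μ ≤
                C * r ^ (p' / 2) *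
                  (⨆ k : Fin n, (tp (k.1 + 1) - tp k.1)) ^ (p' / 2 - 1 / r)) ∧
            ((⨆ k : Fin n, (tp (k.1 + 1) - tp k.1)) < ε →
              ∫ ω, (⨆ k : Fin n, |ξ k ω| ^ p') ∂μ ≤
                C * (⨆ k : Fin n, (tp (k.1 + 1) - tp k.1)) ^
                    (p' / 2 - p' / (2 * Real.log (1 / ⨆ k : Fin n, (tp (k.1 + 1) - tp k.1)))) *
                  (Real.log (1 / ⨆ k : Fin n, (tp (k.1 + 1) - tp k.1))) ^ (p' / 2)) :=
  stmt10_general (mΩ := mΩ) μ T hT h M hbdd p' hp'
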